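/- arXiv:2008.03292 — 3 statements merged into one kernel-verified Lean document; each statement's English description precedes it below -/
import Mathlib

section
/- For every permutation w ∈ S_n, the number of fixed points of w equals the number of records of u = F(w) that are either immediately followed by another record or occupy the final position (equivalently, records that are also ascents or the final position), where F is the Rényi–Foata map. -/
/-- The cycle of `w` containing `x`, listed starting at `x`:
`[x, w x, w² x, …]` with each element appearing once. -/
def cyc {n : ℕ} (w : Equiv.Perm (Fin n)) (x : Fin n) : List (Fin n) :=
  (List.range n).foldl (fun acc k => if (w ^ k) x ∈ acc then acc else acc ++ [(w ^ k) x]) []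

/-- The Rényi–Foata word of `w`: write the canonical cycle decomposition
(each cycle starting with its largest element, cycles listed in increasing
order of largest elements) and drop the parentheses. -/
def foataWord {n : ℕ} (w : Equiv.Perm (Fin n)) : List (Fin n) :=
  ((List.finRange n).filter (fun x => decide (∀ y ∈ cyc w x, y ≤ x))).flatMap (cyc w)

/-- The Rényi–Foata map, as a function `Fin n → Fin n` reading off the word. -/
def foataFun {n : ℕ} (w : Equiv.Perm (Fin n)) : Fin n → Fin n :=
  fun i => (foataWord w).getD i.val ⟨0, i.pos⟩

/-- One-line notation of a permutation, as a list of values in `Fin n`. -/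
def oneLineF {n : ℕ} (w : Equiv.Perm (Fin n)) : List (Fin n) :=
  (List.finRange n).map w

/-- One-line notation with natural-number entries (0-indexed values). -/
def oneLineN {n : ℕ} (w : Equiv.Perm (Fin n)) : List ℕ :=
  (List.finRange n).map fun i => (w i : ℕ)

/-- The Rényi–Foata word with natural-number entries. -/
def wordN {n : ℕ} (w : Equiv.Perm (Fin n)) : List ℕ :=
  (foataWord w).map Fin.val

/-- `i` is a record (left-to-right maximum) position of the word `L`. -/
def recB (L : List ℕ) (i : ℕ) : Bool :=
  decide (i < L.length ∧ ∀ j < i, L.getD j 0 < L.getD i 0)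

/-- Number of records (left-to-right maxima) of the word `L`. -/
def recordCount (L : List ℕ) : ℕ :=
  ((List.range L.length).filter (recB L)).length

/-- Number of fixed points (1-cycles) of `w`. -/
def fixCount {n : ℕ} (w : Equiv.Perm (Fin n)) : ℕ :=
  (Finset.univ.filter fun i : Fin n => w i = i).card

/-- `Rasc L` counts the records of `L` that are immediately followed by a
larger entry (equivalently, by another record) or occupy the final position. -/
def rascCount (L : List ℕ) : ℕ :=
  ((List.range L.length).filter fun i =>
    recB L i && (decide (i + 1 = L.length) || decide (L.getD i 0 < L.getD (i + 1) 0))).length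

/-!
In the Foata word the cycles of `w` appear as consecutive blocks, each headed by its maximum,
with the heads increasing. So the records of the word are exactly the block heads, and a head
is followed by a larger entry, or ends the word, precisely when its block is a singleton,
i.e. a fixed point of `w`.
-/

section AppendIfNew

variable {α : Type*} [DecidableEq α]

def appendIfNew (acc : List α) (a : α) : List α := if a ∈ acc then acc else acc ++ [a]

lemma mem_appendIfNew {acc : List α} {a y : α} : y ∈ appendIfNew acc a ↔ y ∈ acc ∨ y = a := by
  unfold appendIfNew
  split_ifs with ha
  · exact ⟨Or.inl, fun h => h.elim id (· ▸ ha)⟩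
  · simp

lemma mem_foldl_appendIfNew (l acc : List α) (y : α) :
    y ∈ l.foldl appendIfNew acc ↔ y ∈ acc ∨ y ∈ l := by
  induction l generalizing acc with
  | nil => simp
  | cons a l ih =>
    simp only [List.foldl_cons, ih, mem_appendIfNew, List.mem_cons]
    tauto

lemma prefix_foldl_appendIfNew (l acc : List α) : acc <+: l.foldl appendIfNew acc := by
  induction l generalizing acc with
  | nil => exact List.prefix_refl _
  | cons a l ih =>
    refine List.IsPrefix.trans ?_ (ih (appendIfNew acc a))
    unfold appendIfNew
    split_ifs
    · exact List.prefix_refl _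
    · exact List.prefix_append _ _

lemma nodup_foldl_appendIfNew (l acc : List α) (h : acc.Nodup) :
    (l.foldl appendIfNew acc).Nodup := by
  induction l generalizing acc with
  | nil => exact h
  | cons a l ih =>
    apply ih
    unfold appendIfNew
    split_ifs with ha
    · exact h
    · exact List.concat_eq_append ▸ h.concat ha

end AppendIfNew

section Cycle

variable {n : ℕ} (w : Equiv.Perm (Fin n))

lemma cyc_eq_foldl (x : Fin n) :
    cyc w x = ((List.range n).map fun k => (w ^ k) x).foldl appendIfNew [] := by
  rw [List.foldl_map]
  rfl

lemma mem_cyc {x y : Fin n} : y ∈ cyc w x ↔ ∃ k < n, (w ^ k) x = y := by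
  simp [cyc_eq_foldl, mem_foldl_appendIfNew]

lemma nodup_cyc (x : Fin n) : (cyc w x).Nodup := by
  rw [cyc_eq_foldl]
  exact nodup_foldl_appendIfNew _ _ List.nodup_nil

lemma cyc_eq_cons (x : Fin n) : ∃ t, cyc w x = x :: t := by
  obtain ⟨m, rfl⟩ : ∃ m, n = m + 1 := ⟨n - 1, by have := x.pos; omega⟩
  rw [cyc_eq_foldl, List.range_succ_eq_map, List.map_cons, List.foldl_cons]
  obtain ⟨t, ht⟩ := prefix_foldl_appendIfNew
    ((List.map Nat.succ (List.range m)).map fun k => (w ^ k) x) [x]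
  exact ⟨t, by simpa [appendIfNew] using ht.symm⟩

lemma cyc_eq_singleton_iff {x : Fin n} : cyc w x = [x] ↔ w x = x := by
  obtain ⟨t, ht⟩ := cyc_eq_cons w x
  constructor
  · intro h
    rcases Nat.lt_or_ge 1 n with hn | hn
    · have : w x ∈ cyc w x := (mem_cyc w).mpr ⟨1, hn, by simp⟩
      simpa [h] using this
    · have : Subsingleton (Fin n) := Fin.subsingleton_iff_le_one.mpr hn
      exact Subsingleton.elim _ _
  · intro h
    have hx : x ∉ t := (List.nodup_cons.mp (ht ▸ nodup_cyc w x)).1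
    have ht_nil : t = [] := List.eq_nil_iff_forall_not_mem.mpr fun y hy => by
      obtain ⟨k, -, rfl⟩ := (mem_cyc w).mp (ht ▸ List.mem_cons_of_mem x hy)
      exact hx (by rwa [Equiv.Perm.pow_apply_eq_self_of_apply_eq_self h] at hy)
    rw [ht, ht_nil]

lemma length_cyc_eq_one_iff {x : Fin n} : (cyc w x).length = 1 ↔ w x = x := by
  obtain ⟨t, ht⟩ := cyc_eq_cons w x
  simp [← cyc_eq_singleton_iff, ht]

end Cycle

section RascFrom

/-- The `Rasc` statistic of `L` as a suffix of a word whose earlier entries are all below `m`. -/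
def rascCountFrom (m : ℕ) (L : List ℕ) : ℕ :=
  (List.range L.length).countP fun i =>
    decide (m ≤ L.getD i 0 ∧ (∀ j < i, L.getD j 0 < L.getD i 0) ∧
      (i + 1 = L.length ∨ L.getD i 0 < L.getD (i + 1) 0))

lemma rascCount_eq_rascCountFrom_zero (L : List ℕ) : rascCount L = rascCountFrom 0 L := by
  rw [rascCount, rascCountFrom, List.countP_eq_length_filter]
  congr 1
  refine List.filter_congr fun i hi => ?_
  simp_all [recB]

lemma rascCountFrom_cons (m a : ℕ) (L : List ℕ) :
    rascCountFrom m (a :: L) =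
      (if m ≤ a ∧ ∀ b ∈ L.head?, a < b then 1 else 0) + rascCountFrom (max m (a + 1)) L := by
  have head_iff : (m ≤ a ∧ (0 + 1 = L.length + 1 ∨ a < L.getD 0 0)) ↔
      (m ≤ a ∧ ∀ b ∈ L.head?, a < b) := by
    cases L <;> simp
  have tail_iff : ∀ i < L.length,
      (m ≤ L.getD i 0 ∧ (∀ j < i + 1, (a :: L).getD j 0 < L.getD i 0) ∧
        (i + 1 + 1 = L.length + 1 ∨ L.getD i 0 < L.getD (i + 1) 0)) ↔
      (max m (a + 1) ≤ L.getD i 0 ∧ (∀ j < i, L.getD j 0 < L.getD i 0) ∧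
        (i + 1 = L.length ∨ L.getD i 0 < L.getD (i + 1) 0)) := by
    intro i _
    simp only [Nat.forall_lt_succ_left, List.getD_cons_zero, List.getD_cons_succ, max_le_iff,
      Nat.add_one_le_iff, Nat.add_right_cancel_iff]
    tauto
  rw [rascCountFrom, List.length_cons, List.range_succ_eq_map, List.countP_cons,
    List.countP_map, Nat.add_comm, rascCountFrom]
  congr 1
  · simp only [decide_eq_true_eq, List.getD_cons_zero, List.getD_cons_succ, Nat.not_lt_zero,
      false_imp_iff, implies_true, true_and]
    exact if_congr head_iff rfl rfl
  · refine List.countP_congr fun i hi => ?_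
    simp only [Function.comp_apply, Nat.succ_eq_add_one, decide_eq_true_eq, List.getD_cons_succ]
    exact tail_iff i (List.mem_range.mp hi)

lemma rascCountFrom_cons_of_lt {c y : ℕ} (L : List ℕ) (hy : y < c) :
    rascCountFrom c (y :: L) = rascCountFrom c L := by
  rw [rascCountFrom_cons, max_eq_left hy, if_neg (by omega), zero_add]

lemma rascCountFrom_append_of_forall_lt {c : ℕ} (t L : List ℕ) (ht : ∀ y ∈ t, y < c) :
    rascCountFrom c (t ++ L) = rascCountFrom c L := by
  induction t with
  | nil => rfl
  | cons y t ih =>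
    rw [List.cons_append, rascCountFrom_cons_of_lt _ (ht y List.mem_cons_self),
      ih fun z hz => ht z (List.mem_cons_of_mem y hz)]

lemma rascCountFrom_block {m a : ℕ} (t L : List ℕ) (hma : m ≤ a) (ht : ∀ y ∈ t, y < a)
    (hL : ∀ b ∈ L.head?, a < b) :
    rascCountFrom m (a :: (t ++ L)) = (if t = [] then 1 else 0) + rascCountFrom (a + 1) L := by
  rw [rascCountFrom_cons, max_eq_right (by omega),
    rascCountFrom_append_of_forall_lt t L fun y hy => by have := ht y hy; omega]
  congr 1
  cases t with
  | nil => simpa [hma] using hL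
  | cons y t => simp [(ht y List.mem_cons_self).not_gt]

end RascFrom

section Blocks

def IsMaxHeadedBlocks : ℕ → List (List ℕ) → Prop
  | _, [] => True
  | m, B :: bs => ∃ a t, B = a :: t ∧ m ≤ a ∧ (∀ y ∈ t, y < a) ∧ IsMaxHeadedBlocks (a + 1) bs

lemma IsMaxHeadedBlocks.forall_head_flatten_ge {m : ℕ} {bs : List (List ℕ)}
    (h : IsMaxHeadedBlocks m bs) : ∀ b ∈ bs.flatten.head?, m ≤ b := by
  cases bs with
  | nil => simp
  | cons B bs =>
    obtain ⟨a, t, rfl, hma, -⟩ := h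
    simpa using hma

lemma IsMaxHeadedBlocks.rascCountFrom_flatten {m : ℕ} {bs : List (List ℕ)}
    (h : IsMaxHeadedBlocks m bs) :
    rascCountFrom m bs.flatten = bs.countP fun B => B.length = 1 := by
  induction bs generalizing m with
  | nil => rfl
  | cons B bs ih =>
    obtain ⟨a, t, rfl, hma, ht, hbs⟩ := h
    rw [List.flatten_cons, List.cons_append,
      rascCountFrom_block t _ hma ht fun b hb => hbs.forall_head_flatten_ge b hb,
      ih hbs, List.countP_cons, Nat.add_comm]
    cases t <;> simp

end Blocks

section Foata

variable {n : ℕ} (w : Equiv.Perm (Fin n))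

def cycleLeaders : List (Fin n) :=
  (List.finRange n).filter fun x => decide (∀ y ∈ cyc w x, y ≤ x)

lemma wordN_eq_flatten :
    wordN w = ((cycleLeaders w).map fun x => (cyc w x).map Fin.val).flatten := by
  rw [wordN, foataWord, List.map_flatMap, List.flatMap_def, cycleLeaders]

lemma isMaxHeadedBlocks_cycles {M : List (Fin n)} (hM : M.Pairwise (· < ·))
    (hmax : ∀ x ∈ M, ∀ y ∈ cyc w x, y ≤ x) {m : ℕ} (hm : ∀ x ∈ M, m ≤ x.val) :
    IsMaxHeadedBlocks m (M.map fun x => (cyc w x).map Fin.val) := by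
  induction M generalizing m with
  | nil => trivial
  | cons x M ih =>
    obtain ⟨hx_lt, hM⟩ := List.pairwise_cons.mp hM
    obtain ⟨t, ht⟩ := cyc_eq_cons w x
    have hxt : x ∉ t := (List.nodup_cons.mp (ht ▸ nodup_cyc w x)).1
    refine ⟨x.val, t.map Fin.val, by simp [ht], hm x List.mem_cons_self, ?_, ?_⟩
    · simp only [List.mem_map, forall_exists_index, and_imp, forall_apply_eq_imp_iff₂]
      intro z hz
      exact (lt_of_le_of_ne (hmax x List.mem_cons_self z (ht ▸ List.mem_cons_of_mem x hz))
        (ne_of_mem_of_not_mem hz hxt) : z < x)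
    · exact ih hM (fun z hz => hmax z (List.mem_cons_of_mem x hz)) hx_lt

lemma isMaxHeadedBlocks_foata :
    IsMaxHeadedBlocks 0 ((cycleLeaders w).map fun x => (cyc w x).map Fin.val) :=
  isMaxHeadedBlocks_cycles w ((List.pairwise_lt_finRange n).filter _)
    (fun _ hx => of_decide_eq_true (List.mem_filter.mp hx).2) fun _ _ => Nat.zero_le _

lemma fixCount_eq_countP_cycleLeaders :
    fixCount w = (cycleLeaders w).countP fun x => w x = x := by
  rw [cycleLeaders, List.countP_filter, List.countP_eq_length_filter, fixCount, Fin.univ_def]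
  change ((List.finRange n).filter fun x => w x = x).length = _
  congr 1
  refine List.filter_congr fun x _ => ?_
  by_cases hx : w x = x
  · simp [hx, (cyc_eq_singleton_iff w).mpr hx]
  · simp [hx]

end Foata

/-- For every permutation `w ∈ S_n`, the number of fixed
points of `w` equals the number of records of `u = F(w)` that are either
immediately followed by another record (i.e. a larger entry) or occupy the
final position, where `F` is the Rényi–Foata map. -/
theorem fix_eq_rasc_foata (n : ℕ) (w : Equiv.Perm (Fin n)) :
    fixCount w = rascCount (wordN w) := by
  rw [rascCount_eq_rascCountFrom_zero, wordN_eq_flatten,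
    (isMaxHeadedBlocks_foata w).rascCountFrom_flatten, List.countP_map,
    fixCount_eq_countP_cycleLeaders]
  refine List.countP_congr fun x _ => ?_
  simp [length_cyc_eq_one_iff]
end

section
/- For n ≥ 2, the GCD of the orbit sizes of φ = F ∘ I ∘ F^{-1} ∘ R acting on S_n equals 2^{⌊log₂ n⌋}, the greatest power of 2 that is at most n. -/
/-- `IsPhi w w'` says that `w' = φ(w)` where `φ = F ∘ I ∘ F⁻¹ ∘ R`:
first reverse the one-line notation of `w`, then apply `F⁻¹` (giving the
unique `u` whose Foata word is that reversal), invert `u`, and apply `F`. -/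
def IsPhi {n : ℕ} (w w' : Equiv.Perm (Fin n)) : Prop :=
  ∃ u : Equiv.Perm (Fin n),
    foataWord u = (oneLineF w).reverse ∧ oneLineF w' = foataWord u⁻¹

/-- `IsPhiBar w w'` says that `w' = φ̄(w)` where `φ̄ = I ∘ F⁻¹ ∘ R ∘ F`:
apply `F` to `w`, reverse the resulting word, apply `F⁻¹`, and invert. -/
def IsPhiBar {n : ℕ} (w w' : Equiv.Perm (Fin n)) : Prop :=
  foataWord w'⁻¹ = (foataWord w).reverse

/-- `IsGamma w w'` says that `w' = γ(w)` where `γ = I ∘ F⁻¹ ∘ C ∘ F`: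
apply `F` to `w`, complement each entry of the resulting word, apply `F⁻¹`,
and invert. -/
def IsGamma {n : ℕ} (w w' : Equiv.Perm (Fin n)) : Prop :=
  foataWord w'⁻¹ = (foataWord w).map Fin.rev

/-!
Read in one-line notation, `φ` becomes the word map `Φ (A ++ M :: B) = Φ B ++ M :: A`, `M` the
largest letter: this is the identity `F(u⁻¹) = Φ (reverse F(u))`, since inverting `u` reverses
each cycle of its canonical decomposition. On the decreasing binary tree (heap) of a word, `Φ²`
applies `Φ` to both subtrees, while an odd iterate would exchange their vertex sets, which are
disjoint. By induction the orbit of a word has size `2 ^ h`, `h` the height of its heap. A heap on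
`n` vertices has height at least `⌊log₂ n⌋`, with equality for a balanced heap.
-/

open Function

theorem Function.Semiconj.minimalPeriod_eq {α β : Type*} {fa : α → α} {fb : β → β}
    {g : α → β} (h : Semiconj g fa fb) (hg : Injective g) (x : α) :
    minimalPeriod fb (g x) = minimalPeriod fa x :=
  minimalPeriod_eq_minimalPeriod_iff.2 fun _ =>
    ⟨fun hx => hg ((h.iterate_right _ x).trans hx), fun hx => hx.map h⟩

theorem Equiv.Perm.minimalPeriod_pos {β : Type*} [Finite β] (u : Equiv.Perm β) (x : β) :
    0 < minimalPeriod u x :=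
  minimalPeriod_pos_of_mem_periodicPts (u.injective.mem_periodicPts x)

theorem Equiv.Perm.minimalPeriod_inv {β : Type*} (u : Equiv.Perm β) (x : β) :
    minimalPeriod ⇑u⁻¹ x = minimalPeriod u x := by
  simpa [MulAction.period_eq_minimalPeriod, Equiv.Perm.smul_def] using MulAction.period_inv u x

theorem pow_max_dvd_iff {M : Type*} [Monoid M] {x k : M} {a b : ℕ} :
    x ^ max a b ∣ k ↔ x ^ a ∣ k ∧ x ^ b ∣ k := by
  rcases le_total a b with h | h
  · rw [max_eq_right h]
    exact ⟨fun hk => ⟨(pow_dvd_pow x h).trans hk, hk⟩, And.right⟩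
  · rw [max_eq_left h]
    exact ⟨fun hk => ⟨hk, (pow_dvd_pow x h).trans hk⟩, And.left⟩

section Words

variable {α : Type*} [LinearOrder α] {A B v : List α} {M : α}

def splitMax (v : List α) : Option (List α × α × List α) :=
  v.max?.map fun M => (v.takeWhile (· ≠ M), M, (v.dropWhile (· ≠ M)).tail)

theorem splitMax_eq_none : splitMax v = none ↔ v = [] := by
  simp [splitMax]

theorem splitMax_append_cons (hA : ∀ y ∈ A, y < M) (hB : ∀ y ∈ B, y ≤ M) :
    splitMax (A ++ M :: B) = some (A, M, B) := by
  have hne : ∀ y ∈ A, (!decide (y = M)) = true := fun y hy => by simpa using (hA y hy).ne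
  have hmax : (A ++ M :: B).max? = some M := by
    refine List.max?_eq_some_iff.2 ⟨by simp, fun y hy => ?_⟩
    rcases List.mem_append.1 hy with hy | hy
    · exact (hA y hy).le
    · rcases List.mem_cons.1 hy with rfl | hy
      exacts [le_rfl, hB y hy]
  simp [splitMax, hmax, List.takeWhile_append_of_pos hne, List.dropWhile_append_of_pos hne]

theorem splitMax_spec (h : splitMax v = some (A, M, B)) :
    v = A ++ M :: B ∧ (∀ y ∈ A, y < M) ∧ ∀ y ∈ B, y ≤ M := by
  obtain ⟨M', hM', hsplit⟩ := Option.map_eq_some_iff.1 h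
  simp only [Prod.mk.injEq] at hsplit
  obtain ⟨rfl, rfl, rfl⟩ := hsplit
  obtain ⟨hmem, hle⟩ := List.max?_eq_some_iff.1 hM'
  have hdrop : v.dropWhile (· ≠ M') ≠ [] := fun h =>
    by simpa using List.dropWhile_eq_nil_iff.1 h M' hmem
  have hhead : (v.dropWhile (· ≠ M')).head hdrop = M' := by
    simpa using List.head_dropWhile_not _ hdrop
  refine ⟨?_, fun y hy => ?_, fun y hy => hle y ?_⟩
  · conv_lhs => rw [← List.takeWhile_append_dropWhile (p := (· ≠ M')) (l := v),
      ← List.cons_head_tail hdrop, hhead]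
  · exact lt_of_le_of_ne (hle y ((List.takeWhile_sublist _).subset hy))
      (by simpa using List.mem_takeWhile_imp hy)
  · exact (List.dropWhile_sublist _).subset (List.mem_of_mem_tail hy)

theorem length_lt_of_splitMax (h : splitMax v = some (A, M, B)) :
    A.length < v.length ∧ B.length < v.length := by
  rw [(splitMax_spec h).1, List.length_append, List.length_cons]
  omega

theorem induction_on_splitMax {P : List α → Prop} (nil : P [])
    (append_cons : ∀ A M B, (∀ y ∈ A, y < M) → (∀ y ∈ B, y ≤ M) → P A → P B →
      P (A ++ M :: B))
    (v : List α) : P v :=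
  match h : splitMax v with
  | none => splitMax_eq_none.1 h ▸ nil
  | some (A, M, B) =>
    have := length_lt_of_splitMax h
    have ⟨hv, hA, hB⟩ := splitMax_spec h
    hv ▸ append_cons A M B hA hB (induction_on_splitMax nil append_cons A)
      (induction_on_splitMax nil append_cons B)
termination_by v.length

def phiWord (v : List α) : List α :=
  match h : splitMax v with
  | none => []
  | some (A, M, B) =>
    have := (length_lt_of_splitMax h).2
    phiWord B ++ M :: A
termination_by v.length

/-- The height of the decreasing binary tree whose in-order reading is `v`: the root is the
maximum `M` of `v = A ++ M :: B`, with the trees of `A` and `B` as subtrees. -/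
def heapHeight (v : List α) : ℕ :=
  match h : splitMax v with
  | none => 0
  | some (A, _, B) =>
    have := length_lt_of_splitMax h
    if A = [] ∧ B = [] then 0 else max (heapHeight A) (heapHeight B) + 1
termination_by v.length

theorem phiWord_nil : phiWord ([] : List α) = [] := by
  have h : splitMax ([] : List α) = none := rfl
  rw [phiWord]
  split <;> simp_all

theorem phiWord_append_cons (hA : ∀ y ∈ A, y < M) (hB : ∀ y ∈ B, y ≤ M) :
    phiWord (A ++ M :: B) = phiWord B ++ M :: A := by
  have h := splitMax_append_cons hA hB
  rw [phiWord]
  split <;> simp_all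

theorem phiWord_singleton (M : α) : phiWord [M] = [M] := by
  simpa [phiWord_nil] using phiWord_append_cons (A := []) (B := []) (M := M) (by simp) (by simp)

theorem heapHeight_nil : heapHeight ([] : List α) = 0 := by
  have h : splitMax ([] : List α) = none := rfl
  rw [heapHeight]
  split <;> simp_all

theorem heapHeight_append_cons (hA : ∀ y ∈ A, y < M) (hB : ∀ y ∈ B, y ≤ M) :
    heapHeight (A ++ M :: B) =
      if A = [] ∧ B = [] then 0 else max (heapHeight A) (heapHeight B) + 1 := by
  have h := splitMax_append_cons hA hB
  rw [heapHeight]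
  split <;> simp_all

theorem heapHeight_singleton (M : α) : heapHeight [M] = 0 := by
  simpa using heapHeight_append_cons (A := []) (B := []) (M := M) (by simp) (by simp)

theorem phiWord_perm (v : List α) : (phiWord v).Perm v := by
  induction v using induction_on_splitMax with
  | nil => rw [phiWord_nil]
  | append_cons A M B hA hB _ ihB =>
    rw [phiWord_append_cons hA hB]
    exact (ihB.append_right _).trans (List.perm_append_comm.trans List.perm_middle.symm)

theorem phiWord_iterate_perm (k : ℕ) (v : List α) : (phiWord^[k] v).Perm v := by
  induction k with
  | zero => rfl
  | succ k ih => rw [iterate_succ_apply']; exact (phiWord_perm _).trans ih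

theorem phiWord_reverse_flatMap {xs : List α} {t : α → List α} (hxs : xs.Pairwise (· < ·))
    (ht : ∀ x ∈ xs, ∀ y ∈ t x, y < x) :
    phiWord (xs.flatMap fun x => x :: t x).reverse = xs.flatMap fun x => x :: (t x).reverse := by
  induction xs using List.reverseRecOn with
  | nil => simp [phiWord_nil]
  | append_singleton xs x ih =>
    rw [List.pairwise_append] at hxs
    have hlt : ∀ y ∈ xs.flatMap (fun x => x :: t x), y < x := by
      intro y hy
      obtain ⟨x', hx', hy⟩ := List.mem_flatMap.1 hy
      have hx'x : x' < x := hxs.2.2 x' hx' x (List.mem_singleton_self x)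
      rcases List.mem_cons.1 hy with rfl | hy
      exacts [hx'x, (ht x' (by simp [hx']) y hy).trans hx'x]
    simp only [List.flatMap_append, List.flatMap_singleton, List.reverse_append,
      List.reverse_cons, List.append_assoc, List.singleton_append]
    rw [phiWord_append_cons (fun y hy => ht x (by simp) y (List.mem_reverse.1 hy))
      (fun y hy => (hlt y (List.mem_reverse.1 hy)).le),
      ih hxs.1 fun x' hx' => ht x' (by simp [hx'])]

theorem length_lt_two_pow_heapHeight (v : List α) : v.length < 2 ^ (heapHeight v + 1) := by
  induction v using induction_on_splitMax with
  | nil => simp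
  | append_cons A M B hA hB ihA ihB =>
    rw [heapHeight_append_cons hA hB]
    split_ifs with hAB
    · simp [hAB.1, hAB.2]
    · have hA' : 2 ^ (heapHeight A + 1) ≤ 2 ^ (max (heapHeight A) (heapHeight B) + 1) :=
        Nat.pow_le_pow_right two_pos (Nat.succ_le_succ (le_max_left _ _))
      have hB' : 2 ^ (heapHeight B + 1) ≤ 2 ^ (max (heapHeight A) (heapHeight B) + 1) :=
        Nat.pow_le_pow_right two_pos (Nat.succ_le_succ (le_max_right _ _))
      rw [List.length_append, List.length_cons, pow_succ _ (_ + 1)]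
      omega

theorem log_length_le_heapHeight (v : List α) : Nat.log 2 v.length ≤ heapHeight v :=
  Nat.lt_succ_iff.1 (Nat.log_lt_of_lt_pow' (Nat.succ_ne_zero _) (length_lt_two_pow_heapHeight v))

theorem exists_perm_heapHeight_le_log (l : List α) (hl : l.Nodup) :
    ∃ v : List α, v.Perm l ∧ heapHeight v ≤ Nat.log 2 l.length := by
  induction hm : l.length using Nat.strong_induction_on generalizing l with
  | _ m ih =>
  rcases eq_or_ne l [] with rfl | hne
  · exact ⟨[], .nil, by simp [heapHeight_nil]⟩
  have hm1 : 0 < m := hm ▸ List.length_pos_iff.2 hne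
  obtain ⟨M, hMl, hMmax⟩ : ∃ M ∈ l, ∀ y ∈ l, y ≤ M :=
    ⟨l.max hne, List.max_mem hne, fun y hy => List.le_max_of_mem hy⟩
  set R := l.erase M
  have hR : ∀ y ∈ R, y < M := fun y hy =>
    lt_of_le_of_ne (hMmax y (hl.mem_erase_iff.1 hy).2) (hl.mem_erase_iff.1 hy).1
  have hRlen : R.length = m - 1 := by rw [List.length_erase_of_mem hMl, hm]
  have hPlen : (R.take (m / 2)).length = m / 2 := by rw [List.length_take, hRlen]; omega
  have hQlen : (R.drop (m / 2)).length = m - 1 - m / 2 := by rw [List.length_drop, hRlen]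
  obtain ⟨vP, hvP, hhP⟩ :=
    ih _ (by omega) _ ((hl.erase M).sublist (List.take_sublist _ _)) hPlen
  obtain ⟨vQ, hvQ, hhQ⟩ :=
    ih _ (by omega) _ ((hl.erase M).sublist (List.drop_sublist _ _)) hQlen
  have hPM : ∀ y ∈ vP, y < M := fun y hy => hR y ((List.take_subset _ _) (hvP.subset hy))
  have hQM : ∀ y ∈ vQ, y < M := fun y hy => hR y ((List.drop_subset _ _) (hvQ.subset hy))
  refine ⟨vP ++ M :: vQ, ?_, ?_⟩
  · refine List.perm_middle.trans (((hvP.append hvQ).cons M).trans ?_)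
    rw [List.take_append_drop]
    exact (List.perm_cons_erase hMl).symm
  rw [heapHeight_append_cons hPM fun y hy => (hQM y hy).le]
  split_ifs with hPQ
  · exact Nat.zero_le _
  have hm2 : 2 ≤ m := by
    rcases not_and_or.1 hPQ with h | h
    · have := List.length_pos_iff.2 h; rw [hvP.length_eq, hPlen] at this; omega
    · have := List.length_pos_iff.2 h; rw [hvQ.length_eq, hQlen] at this; omega
  have hlog : Nat.log 2 (m / 2) + 1 = Nat.log 2 m := by
    rw [Nat.log_div_base]; have := Nat.log_pos one_lt_two hm2; omega
  have hQ : Nat.log 2 (m - 1 - m / 2) ≤ Nat.log 2 (m / 2) := Nat.log_mono_right (by omega)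
  omega

theorem List.append_cons_inj_of_forall_lt {A' B' : List α} (hA' : ∀ y ∈ A', y < M)
    (hB' : ∀ y ∈ B', y < M) : A' ++ M :: B' = A ++ M :: B ↔ A' = A ∧ B' = B := by
  rw [List.append_cons_inj_of_notMem (fun h => (hA' M h).false) (fun h => (hB' M h).false)]
  simp

theorem phiWord_iterate_two_mul (hA : ∀ y ∈ A, y < M) (hB : ∀ y ∈ B, y < M) (k : ℕ) :
    phiWord^[2 * k] (A ++ M :: B) = phiWord^[k] A ++ M :: phiWord^[k] B := by
  induction k with
  | zero => rfl
  | succ k ih =>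
    have hA' : ∀ y ∈ phiWord^[k] A, y < M :=
      fun y hy => hA y ((phiWord_iterate_perm k A).subset hy)
    have hB' (j : ℕ) : ∀ y ∈ phiWord^[j] B, y < M :=
      fun y hy => hB y ((phiWord_iterate_perm j B).subset hy)
    rw [Nat.mul_succ, iterate_succ_apply', iterate_succ_apply', ih,
      phiWord_append_cons hA' fun y hy => (hB' k y hy).le, ← iterate_succ_apply' phiWord k B,
      phiWord_append_cons (hB' (k + 1)) fun y hy => (hA' y hy).le, iterate_succ_apply' phiWord k A]

theorem isPeriodicPt_two_mul_append_cons_iff (hA : ∀ y ∈ A, y < M) (hB : ∀ y ∈ B, y < M)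
    (k : ℕ) : IsPeriodicPt phiWord (2 * k) (A ++ M :: B) ↔
      IsPeriodicPt phiWord k A ∧ IsPeriodicPt phiWord k B := by
  simp only [IsPeriodicPt, IsFixedPt, phiWord_iterate_two_mul hA hB]
  exact List.append_cons_inj_of_forall_lt (fun y hy => hA y ((phiWord_iterate_perm k A).subset hy))
    (fun y hy => hB y ((phiWord_iterate_perm k B).subset hy))

theorem not_isPeriodicPt_two_mul_add_one (hv : (A ++ M :: B).Nodup) (hA : ∀ y ∈ A, y < M)
    (hB : ∀ y ∈ B, y < M) (hAB : ¬(A = [] ∧ B = [])) (k : ℕ) :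
    ¬IsPeriodicPt phiWord (2 * k + 1) (A ++ M :: B) := by
  intro h
  have hA' : ∀ y ∈ phiWord^[k] A, y < M :=
    fun y hy => hA y ((phiWord_iterate_perm k A).subset hy)
  have hB' (j : ℕ) : ∀ y ∈ phiWord^[j] B, y < M :=
    fun y hy => hB y ((phiWord_iterate_perm j B).subset hy)
  rw [IsPeriodicPt, IsFixedPt, iterate_succ_apply', phiWord_iterate_two_mul hA hB,
    phiWord_append_cons hA' (fun y hy => (hB' k y hy).le), ← iterate_succ_apply' phiWord k B,
    List.append_cons_inj_of_forall_lt (hB' (k + 1)) hA'] at h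
  have hperm : A.Perm B := h.1 ▸ phiWord_iterate_perm (k + 1) B
  have hdisj : A.Disjoint (M :: B) := List.disjoint_of_nodup_append hv
  have hA_nil : A = [] := List.eq_nil_iff_forall_not_mem.2 fun a ha =>
    hdisj ha (List.mem_cons_of_mem M (hperm.subset ha))
  exact hAB ⟨hA_nil, List.Perm.eq_nil (hA_nil ▸ hperm.symm)⟩

theorem isPeriodicPt_phiWord_iff {v : List α} (hv : v.Nodup) (n : ℕ) :
    IsPeriodicPt phiWord n v ↔ 2 ^ heapHeight v ∣ n := by
  induction v using induction_on_splitMax generalizing n with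
  | nil => simp [IsPeriodicPt, IsFixedPt, heapHeight_nil, iterate_fixed phiWord_nil]
  | append_cons A M B hA hB_le ihA ihB =>
    have hB : ∀ y ∈ B, y < M := fun y hy =>
      (hB_le y hy).lt_of_ne fun h => (List.nodup_cons.1 hv.of_append_right).1 (h ▸ hy)
    by_cases hAB : A = [] ∧ B = []
    · obtain ⟨rfl, rfl⟩ := hAB
      have hfix : IsFixedPt phiWord [M] := phiWord_singleton M
      simp [heapHeight_singleton, (hfix.isPeriodicPt 1).trans_dvd (one_dvd n)]
    rw [heapHeight_append_cons hA hB_le, if_neg hAB, pow_succ']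
    obtain ⟨k, rfl | rfl⟩ := Nat.even_or_odd' n
    · rw [isPeriodicPt_two_mul_append_cons_iff hA hB, ihA hv.of_append_left,
        ihB hv.of_append_right.of_cons, Nat.mul_dvd_mul_iff_left two_pos, pow_max_dvd_iff]
    · refine iff_of_false (not_isPeriodicPt_two_mul_add_one hv hA hB hAB k) fun h => ?_
      have := (dvd_mul_right 2 _).trans h
      omega

theorem minimalPeriod_phiWord {v : List α} (hv : v.Nodup) :
    minimalPeriod phiWord v = 2 ^ heapHeight v :=
  Nat.dvd_right_iff_eq.1 fun n => by
    rw [← isPeriodicPt_iff_minimalPeriod_dvd, isPeriodicPt_phiWord_iff hv]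

end Words

section Cycles

variable {n : ℕ} (u : Equiv.Perm (Fin n)) (x : Fin n)

theorem cyc_eq_map_range : cyc u x = (List.range (minimalPeriod u x)).map fun k => u^[k] x := by
  set m := minimalPeriod u x
  have key (j : ℕ) : (List.range j).foldl
      (fun acc k => if (u ^ k) x ∈ acc then acc else acc ++ [(u ^ k) x]) [] =
      (List.range (min j m)).map fun k => u^[k] x := by
    induction j with
    | zero => simp
    | succ j ih =>
      rw [List.range_succ, List.foldl_append, ih, List.foldl_cons, List.foldl_nil,
        Equiv.Perm.coe_pow]
      by_cases hj : j < m
      · have hnew : u^[j] x ∉ (List.range j).map fun k => u^[k] x := by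
          simp only [List.mem_map, List.mem_range, not_exists, not_and]
          exact fun k hk h => hk.ne (iterate_injOn_Iio_minimalPeriod (hk.trans hj) hj h)
        rw [min_eq_left hj.le, if_neg hnew, min_eq_left hj, List.range_succ, List.map_append]
        rfl
      · have hold : u^[j] x ∈ (List.range m).map fun k => u^[k] x :=
          List.mem_map.2 ⟨j % m, List.mem_range.2 (Nat.mod_lt j (u.minimalPeriod_pos x)),
            iterate_mod_minimalPeriod_eq⟩
        rw [min_eq_right (by omega), if_pos hold, min_eq_right (by omega)]
  rw [cyc, key, min_eq_right (by simpa using minimalPeriod_le_card (f := u) (x := x))]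

theorem cyc_nodup : (cyc u x).Nodup := by
  rw [cyc_eq_map_range]
  exact List.nodup_range.map_on fun a ha b hb h =>
    iterate_injOn_Iio_minimalPeriod (by simpa using ha) (by simpa using hb) h

theorem cyc_eq_cons_tail : cyc u x = x :: (cyc u x).tail := by
  obtain ⟨t, ht⟩ := Nat.exists_eq_add_one.2 (u.minimalPeriod_pos x)
  rw [cyc_eq_map_range, ht, List.range_succ_eq_map]
  rfl

theorem cyc_inv : cyc u⁻¹ x = x :: (cyc u x).tail.reverse := by
  have hleft : LeftInverse ⇑u ⇑u⁻¹ := u.right_inv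
  have hm := u.minimalPeriod_pos x
  rw [cyc_eq_map_range, cyc_eq_map_range, u.minimalPeriod_inv]
  apply List.ext_getElem
  · simp only [List.length_map, List.length_range, List.length_cons, List.length_reverse,
      List.length_tail]
    omega
  rintro (_ | j) hj _
  · simp
  simp only [List.getElem_map, List.getElem_range, List.getElem_cons_succ, List.getElem_reverse,
    List.getElem_tail, List.length_tail, List.length_map, List.length_range]
  replace hj : j + 1 < minimalPeriod u x := by simpa using hj
  -- both sides are sent to `x` by `u^[j + 1]`, as `u^[minimalPeriod u x] x = x`
  apply u.injective.iterate (j + 1)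
  rw [hleft.iterate (j + 1) x, ← iterate_add_apply,
    show j + 1 + (minimalPeriod u x - 1 - 1 - j + 1) = minimalPeriod u x by omega,
    iterate_minimalPeriod]

variable {u x} in
theorem mem_cyc_inv {y : Fin n} : y ∈ cyc u⁻¹ x ↔ y ∈ cyc u x := by
  conv_rhs => rw [cyc_eq_cons_tail u x]
  simp [cyc_inv]

theorem foataWord_inv : foataWord u⁻¹ = phiWord (foataWord u).reverse := by
  set xs := (List.finRange n).filter fun x => decide (∀ y ∈ cyc u x, y ≤ x)
  have hleaders :
      (List.finRange n).filter (fun x => decide (∀ y ∈ cyc u⁻¹ x, y ≤ x)) = xs := by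
    simp only [xs, mem_cyc_inv]
  have hword : foataWord u = xs.flatMap fun x => x :: (cyc u x).tail :=
    List.flatMap_congr fun x _ => cyc_eq_cons_tail u x
  have hword_inv : foataWord u⁻¹ = xs.flatMap fun x => x :: (cyc u x).tail.reverse := by
    rw [foataWord, hleaders]
    exact List.flatMap_congr fun x _ => cyc_inv u x
  rw [hword_inv, hword, phiWord_reverse_flatMap ((List.pairwise_lt_finRange n).filter _)]
  intro x hx y hy
  have hyx : y ≠ x := by
    rintro rfl
    have := cyc_nodup u y
    rw [cyc_eq_cons_tail] at this
    exact (List.nodup_cons.1 this).1 hy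
  have hle := of_decide_eq_true (List.mem_filter.1 hx).2 y
  exact lt_of_le_of_ne (hle (by rw [cyc_eq_cons_tail]; exact List.mem_cons_of_mem x hy)) hyx

end Cycles

section OneLine

variable {n : ℕ}

theorem oneLineF_injective : Injective (oneLineF (n := n)) := fun w w' h =>
  Equiv.ext (congrFun (List.ofFn_injective (by simpa [oneLineF, List.ofFn_eq_map] using h)))

theorem oneLineF_nodup (w : Equiv.Perm (Fin n)) : (oneLineF w).Nodup :=
  (List.nodup_finRange n).map w.injective

theorem exists_oneLineF_eq {v : List (Fin n)} (hv : v.Perm (List.finRange n)) :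
    ∃ w : Equiv.Perm (Fin n), oneLineF w = v := by
  have hlen : v.length = n := by simpa using hv.length_eq
  have hnd : v.Nodup := hv.nodup_iff.2 (List.nodup_finRange n)
  let f (i : Fin n) : Fin n := v[i.val]
  have hf : Injective f := fun i j h => Fin.ext (hnd.getElem_inj_iff.1 h)
  refine ⟨Equiv.ofBijective f (Finite.injective_iff_bijective.1 hf), ?_⟩
  apply List.ext_getElem <;> simp [oneLineF, f, hlen]

theorem log_le_heapHeight_oneLineF (w : Equiv.Perm (Fin n)) :
    Nat.log 2 n ≤ heapHeight (oneLineF w) := by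
  simpa [oneLineF] using log_length_le_heapHeight (oneLineF w)

theorem oneLineF_eq_phiWord {w w' : Equiv.Perm (Fin n)} (h : IsPhi w w') :
    oneLineF w' = phiWord (oneLineF w) := by
  obtain ⟨u, hu, hw'⟩ := h
  rw [hw', foataWord_inv, hu, List.reverse_reverse]

end OneLine

theorem phi_orbit_gcd_general (n : ℕ)
    (φ : Equiv.Perm (Fin n) → Equiv.Perm (Fin n))
    (hφ : ∀ w, IsPhi w (φ w)) :
    Finset.univ.gcd (fun w : Equiv.Perm (Fin n) => Function.minimalPeriod φ w) =
      2 ^ Nat.log 2 n := by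
  have hperiod (w : Equiv.Perm (Fin n)) :
      minimalPeriod φ w = 2 ^ heapHeight (oneLineF w) := by
    rw [← Semiconj.minimalPeriod_eq (fun w => oneLineF_eq_phiWord (hφ w)) oneLineF_injective,
      minimalPeriod_phiWord (oneLineF_nodup w)]
  obtain ⟨v, hv, hheight⟩ := exists_perm_heapHeight_le_log _ (List.nodup_finRange n)
  obtain ⟨w₀, rfl⟩ := exists_oneLineF_eq hv
  have hw₀ : heapHeight (oneLineF w₀) = Nat.log 2 n :=
    le_antisymm (by simpa using hheight) (log_le_heapHeight_oneLineF w₀)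
  refine Nat.dvd_antisymm ?_ (Finset.dvd_gcd fun w _ => ?_)
  · rw [← hw₀, ← hperiod]
    exact Finset.gcd_dvd (Finset.mem_univ w₀)
  · rw [hperiod]
    exact pow_dvd_pow 2 (log_le_heapHeight_oneLineF w)

/-- For `n ≥ 2`, the GCD of the orbit sizes of
`φ = F ∘ I ∘ F⁻¹ ∘ R` acting on `S_n` equals `2^⌊log₂ n⌋`, the greatest power
of `2` that is at most `n`. -/
theorem phi_orbit_gcd (n : ℕ) (hn : 2 ≤ n)
    (φ : Equiv.Perm (Fin n) → Equiv.Perm (Fin n))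
    (hφ : ∀ w, IsPhi w (φ w)) :
    Finset.univ.gcd (fun w : Equiv.Perm (Fin n) => Function.minimalPeriod φ w) =
      2 ^ Nat.log 2 n :=
  phi_orbit_gcd_general n φ hφ
end

section
/- For γ = I ∘ F^{-1} ∘ C ∘ F acting on S_n with n ≥ 2: the elements 1 and n lie in the same cycle of w if and only if they lie in different cycles of γ(w). Consequently every γ-orbit has even size, and the indicator statistic 1_{(1,n)} (whether 1 and n are in the same cycle) is (1/2)-mesic. -/
/-!
In the Foata word `F(w)` every cycle is written from its largest letter, and the cycles appear in
increasing order of their maxima; so the cycle of `n` comes last and begins with `n`. Hence `1` and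
`n` share a cycle of `w` exactly when `n` precedes `1` in `F(w)`. Complementation exchanges the
letters `1` and `n` in place, so their order in `F(γ(w)⁻¹) = C(F(w))` is the opposite one, and
`γ(w)⁻¹` has the same cycles as `γ(w)`. A property that every application of `γ` toggles
alternates along each orbit, so orbits have even length and the property holds on exactly half
of each.
-/

section AppendNew

variable {α β : Type*} [DecidableEq α] (f : β → α)

theorem List.mem_foldl_appendNew_iff (l : List β) (acc : List α) (y : α) :
    y ∈ l.foldl (fun acc b => if f b ∈ acc then acc else acc ++ [f b]) acc ↔
      y ∈ acc ∨ ∃ b ∈ l, f b = y := by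
  induction l generalizing acc with
  | nil => simp
  | cons b l ih =>
    rw [List.foldl_cons, ih]
    split_ifs <;> simp only [List.mem_append, List.mem_cons] <;> grind

theorem List.prefix_foldl_appendNew (l : List β) (acc : List α) :
    acc <+: l.foldl (fun acc b => if f b ∈ acc then acc else acc ++ [f b]) acc := by
  induction l generalizing acc with
  | nil => exact List.prefix_refl acc
  | cons b l ih =>
    rw [List.foldl_cons]
    split_ifs
    · exact ih acc
    · exact (List.prefix_append acc [f b]).trans (ih _)

end AppendNew

theorem List.idxOf_map_of_injective {α β : Type*} [BEq α] [LawfulBEq α] [BEq β] [LawfulBEq β]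
    {f : α → β} (hf : Function.Injective f) (a : α) (l : List α) :
    (l.map f).idxOf (f a) = l.idxOf a := by
  induction l with
  | nil => simp
  | cons b l ih => by_cases hba : b = a <;> simp [hf.eq_iff, hba, ih]

theorem Equiv.Perm.SameCycle.exists_pow_lt_card {α : Type*} [Fintype α] [DecidableEq α]
    {f : Equiv.Perm α} {x y : α} (h : f.SameCycle x y) :
    ∃ k < Fintype.card α, (f ^ k) x = y := by
  by_cases hx : x ∈ f.support
  · obtain ⟨k, hk, hky⟩ := h.exists_pow_eq_of_mem_support hx
    exact ⟨k, hk.trans_le (Finset.card_le_univ _), hky⟩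
  · exact ⟨0, Fintype.card_pos_iff.2 ⟨x⟩, h.eq_of_left (Equiv.Perm.notMem_support.1 hx)⟩

section Foata

variable {n : ℕ}

theorem mem_cyc_iff {w : Equiv.Perm (Fin n)} {x y : Fin n} :
    y ∈ cyc w x ↔ w.SameCycle x y := by
  rw [cyc, List.mem_foldl_appendNew_iff (fun k : ℕ => (w ^ k) x)]
  simp only [List.not_mem_nil, List.mem_range, false_or]
  constructor
  · rintro ⟨k, -, rfl⟩
    exact ⟨k, by rw [zpow_natCast]⟩
  · intro h
    simpa only [Fintype.card_fin] using h.exists_pow_lt_card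

theorem exists_cyc_eq_cons (w : Equiv.Perm (Fin n)) (x : Fin n) : ∃ t, cyc w x = x :: t := by
  obtain ⟨m, rfl⟩ : ∃ m, n = m + 1 := Nat.exists_eq_add_one_of_ne_zero x.pos.ne'
  have hpre : [x] <+: cyc w x := by
    rw [cyc, List.range_succ_eq_map, List.foldl_cons]
    simpa using List.prefix_foldl_appendNew (fun k : ℕ => (w ^ k) x) _ [x]
  obtain ⟨t, ht⟩ := hpre
  exact ⟨t, ht.symm⟩

theorem mem_foataWord (w : Equiv.Perm (Fin n)) (y : Fin n) : y ∈ foataWord w := by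
  classical
  obtain ⟨x, hx, hmax⟩ := (Finset.univ.filter (w.SameCycle y)).exists_max_image id
    ⟨y, Finset.mem_filter.2 ⟨Finset.mem_univ _, .refl w y⟩⟩
  have hyx : w.SameCycle y x := (Finset.mem_filter.1 hx).2
  refine List.mem_flatMap.2 ⟨x, List.mem_filter.2 ⟨List.mem_finRange x, ?_⟩,
    mem_cyc_iff.2 hyx.symm⟩
  simpa using fun z hz =>
    hmax z (Finset.mem_filter.2 ⟨Finset.mem_univ _, hyx.trans (mem_cyc_iff.1 hz)⟩)

theorem exists_foataWord_eq_append_cyc_last {m : ℕ} (w : Equiv.Perm (Fin (m + 1))) :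
    ∃ front, foataWord w = front ++ cyc w (Fin.last m) ∧
      ∀ y ∈ front, ¬ w.SameCycle y (Fin.last m) := by
  set isLeader : Fin (m + 1) → Bool := fun x => decide (∀ y ∈ cyc w x, y ≤ x)
  have hleaders : (List.finRange (m + 1)).filter isLeader =
      (List.finRange m |>.map Fin.castSucc).filter isLeader ++ [Fin.last m] := by
    rw [List.finRange_succ_last, List.filter_append]
    simp [isLeader, Fin.le_last]
  refine ⟨((List.finRange m |>.map Fin.castSucc).filter isLeader).flatMap (cyc w), ?_, ?_⟩
  · simp [foataWord, isLeader, hleaders]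
  · intro y hy hyl
    obtain ⟨x, hx, hyx⟩ := List.mem_flatMap.1 hy
    obtain ⟨⟨j, -, rfl⟩, hlead⟩ := List.mem_filter.1 hx |>.imp List.mem_map.1 id
    have hle : Fin.last m ≤ j.castSucc :=
      of_decide_eq_true hlead _ (mem_cyc_iff.2 ((mem_cyc_iff.1 hyx).trans hyl))
    exact (Fin.castSucc_lt_last j).not_ge hle

theorem sameCycle_last_iff_idxOf_lt {m : ℕ} (w : Equiv.Perm (Fin (m + 1))) {x : Fin (m + 1)}
    (hx : x ≠ Fin.last m) :
    w.SameCycle x (Fin.last m) ↔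
      (foataWord w).idxOf (Fin.last m) < (foataWord w).idxOf x := by
  obtain ⟨front, hword, hfront⟩ := exists_foataWord_eq_append_cyc_last w
  obtain ⟨t, hcyc⟩ := exists_cyc_eq_cons w (Fin.last m)
  have hlast : (foataWord w).idxOf (Fin.last m) = front.length := by
    rw [hword, List.idxOf_append_of_notMem (fun h => hfront _ h (.refl w _)), hcyc,
      List.idxOf_cons_self, add_zero]
  rw [hlast]
  constructor
  · intro hxl
    rw [hword, List.idxOf_append_of_notMem (fun h => hfront x h hxl), hcyc,
      List.idxOf_cons_ne _ hx.symm]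
    omega
  · intro hlt
    by_contra hxl
    have hxfront : x ∈ front := by
      have := mem_foataWord w x
      rw [hword, List.mem_append, mem_cyc_iff] at this
      exact this.resolve_right fun h => hxl h.symm
    rw [hword, List.idxOf_append_of_mem hxfront] at hlt
    exact (List.idxOf_lt_length_of_mem hxfront).not_gt hlt

end Foata

theorem IsGamma.sameCycle_zero_last_iff {m : ℕ} (hm : m ≠ 0) {w w' : Equiv.Perm (Fin (m + 1))}
    (h : IsGamma w w') :
    w.SameCycle 0 (Fin.last m) ↔ ¬ w'.SameCycle 0 (Fin.last m) := by
  have h0 : (0 : Fin (m + 1)) ≠ Fin.last m := by simpa [Fin.ext_iff] using hm.symm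
  have hidx (y : Fin (m + 1)) : (foataWord w'⁻¹).idxOf y.rev = (foataWord w).idxOf y := by
    rw [h, List.idxOf_map_of_injective Fin.rev_injective]
  have hidx0 := hidx 0
  have hidxLast := hidx (Fin.last m)
  rw [Fin.rev_zero] at hidx0
  rw [Fin.rev_last] at hidxLast
  have hne := (List.idxOf_inj (mem_foataWord w 0)).not.2 h0
  rw [← Equiv.Perm.sameCycle_inv (f := w'), sameCycle_last_iff_idxOf_lt w h0,
    sameCycle_last_iff_idxOf_lt _ h0, hidx0, hidxLast]
  omega

section Flip

variable {α : Type*} {f : α → α} {p : α → Prop}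

theorem iterate_apply_iff_of_apply_iff_not (hf : ∀ x, p (f x) ↔ ¬ p x) (x : α) (k : ℕ) :
    p (f^[k] x) ↔ (Even k ↔ p x) := by
  induction k with
  | zero => simp
  | succ k ih =>
    rw [Function.iterate_succ_apply', hf, ih, Nat.even_add_one]
    tauto

theorem even_minimalPeriod_of_apply_iff_not (hf : ∀ x, p (f x) ↔ ¬ p x) (x : α) :
    Even (Function.minimalPeriod f x) := by
  have := iterate_apply_iff_of_apply_iff_not hf x (Function.minimalPeriod f x)
  rw [Function.iterate_minimalPeriod] at this
  tauto

theorem sum_range_two_mul_ite_of_apply_iff_not {R : Type*} [AddCommMonoidWithOne R]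
    [DecidablePred p] (hf : ∀ x, p (f x) ↔ ¬ p x) (x : α) (m : ℕ) :
    ∑ k ∈ Finset.range (2 * m), (if p (f^[k] x) then (1 : R) else 0) = m := by
  induction m with
  | zero => simp
  | succ m ih =>
    rw [show 2 * (m + 1) = 2 * m + 1 + 1 by ring, Finset.sum_range_succ, Finset.sum_range_succ,
      ih, Function.iterate_succ_apply', Nat.cast_succ]
    by_cases hp : p (f^[2 * m] x) <;> simp [hp, hf]

theorem sum_range_minimalPeriod_ite_of_apply_iff_not {K : Type*} [Field K] [CharZero K]
    [DecidablePred p] (hf : ∀ x, p (f x) ↔ ¬ p x) (x : α) :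
    ∑ k ∈ Finset.range (Function.minimalPeriod f x), (if p (f^[k] x) then (1 : K) else 0) =
      (Function.minimalPeriod f x : K) / 2 := by
  obtain ⟨m, hm⟩ := (even_minimalPeriod_of_apply_iff_not hf x).two_dvd
  rw [hm, sum_range_two_mul_ite_of_apply_iff_not hf x m, Nat.cast_mul, Nat.cast_two,
    mul_div_cancel_left₀ _ (two_ne_zero' K)]

end Flip

/-- For `γ = I ∘ F⁻¹ ∘ C ∘ F` on `S_n` with `n ≥ 2`: the
elements `1` and `n` lie in the same cycle of `w` iff they lie in different
cycles of `γ(w)`.  Consequently every `γ`-orbit has even size, and the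
indicator of `1` and `n` being in the same cycle is `(1/2)`-mesic. -/
theorem gamma_sameCycle (n : ℕ) (hn : 2 ≤ n)
    (γ : Equiv.Perm (Fin n) → Equiv.Perm (Fin n))
    (hγ : ∀ w, IsGamma w (γ w)) :
    (∀ w : Equiv.Perm (Fin n),
        w.SameCycle ⟨0, by omega⟩ ⟨n - 1, by omega⟩ ↔
          ¬ (γ w).SameCycle ⟨0, by omega⟩ ⟨n - 1, by omega⟩) ∧
    (∀ w : Equiv.Perm (Fin n), Even (Function.minimalPeriod γ w)) ∧
    (∀ w : Equiv.Perm (Fin n),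
        ∑ k ∈ Finset.range (Function.minimalPeriod γ w),
            (if (γ^[k] w).SameCycle ⟨0, by omega⟩ ⟨n - 1, by omega⟩
              then (1 : ℚ) else 0) =
          (Function.minimalPeriod γ w : ℚ) / 2) := by
  obtain ⟨m, rfl⟩ : ∃ m, n = m + 1 := ⟨n - 1, by omega⟩
  let linked (w : Equiv.Perm (Fin (m + 1))) : Prop := w.SameCycle 0 (Fin.last m)
  have hflip (w : Equiv.Perm (Fin (m + 1))) : linked (γ w) ↔ ¬ linked w :=
    ((hγ w).sameCycle_zero_last_iff (by omega)).not_left.symm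
  exact ⟨fun w => (hγ w).sameCycle_zero_last_iff (by omega),
    even_minimalPeriod_of_apply_iff_not hflip,
    sum_range_minimalPeriod_ite_of_apply_iff_not hflip⟩
end
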